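/- arXiv:math/0508007 — 6 statements merged into one kernel-verified Lean document; each statement's English description precedes it below -/
import Mathlib

section
/- Let 1 → C →ι G →π H → 1 be a central extension of a commutative group H by a commutative group C, with commutator pairing e. Let K be a commutative group, K^D = Hom(K, C), and G(K) the standard theta group, whose commutator pairing is e_K((x₁, l₁), (x₂, l₂)) = l₂(x₁)·l₁(x₂)⁻¹ on K × K^D. Call a group isomorphism Θ: G(K) → G with Θ(α, 0, 1) = ι(α) for all α ∈ C a theta structure, and call a group isomorphism δ: K × K^D → H with e(δ(z₁), δ(z₂)) = e_K(z₁, z₂) for all z₁, z₂ a Lagrangian decomposition. Then the assignment (δ, u, v) ↦ Θ_{u,v}, where Θ_{u,v}(α, x, l) = ι(α)·v(l)·u(x), is a bijection from the set of triples (δ, u, v) — with δ a Lagrangian decomposition, u: K → G a group homomorphism with π(u(x)) = δ(x, 1) for all x ∈ K, and v: K^D → G a group homomorphism with π(v(l)) = δ(0, l) for all l ∈ K^D — onto the set of theta structures; the inverse bijection sends Θ to (δ_Θ, u_Θ, v_Θ), where δ_Θ is the isomorphism K × K^D → H induced by Θ on the quotients by C, u_Θ(x) = Θ(1, x, 1),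 and v_Θ(l) = Θ(1, 0, l). -/
/-- The standard theta group `G(K)` of type `K` over `C`: underlying set `C × K × Hom(K, C)`,
with multiplication `(α₁, x₁, l₁) * (α₂, x₂, l₂) = (α₁·α₂·l₂(x₁), x₁·x₂, l₁·l₂)`. -/
@[ext]
structure ThetaGroup (C K : Type*) [CommGroup C] [CommGroup K] where
  a : C
  x : K
  l : K →* C

namespace ThetaGroup

variable {C K : Type*} [CommGroup C] [CommGroup K]

instance : Mul (ThetaGroup C K) :=
  ⟨fun g₁ g₂ => ⟨g₁.a * g₂.a * g₂.l g₁.x, g₁.x * g₂.x, g₁.l * g₂.l⟩⟩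

instance : One (ThetaGroup C K) := ⟨⟨1, 1, 1⟩⟩

instance : Inv (ThetaGroup C K) := ⟨fun g => ⟨g.a⁻¹ * g.l g.x, g.x⁻¹, g.l⁻¹⟩⟩

@[simp] theorem mul_a (g₁ g₂ : ThetaGroup C K) : (g₁ * g₂).a = g₁.a * g₂.a * g₂.l g₁.x := rfl
@[simp] theorem mul_x (g₁ g₂ : ThetaGroup C K) : (g₁ * g₂).x = g₁.x * g₂.x := rfl
@[simp] theorem mul_l (g₁ g₂ : ThetaGroup C K) : (g₁ * g₂).l = g₁.l * g₂.l := rfl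
@[simp] theorem one_a : (1 : ThetaGroup C K).a = 1 := rfl
@[simp] theorem one_x : (1 : ThetaGroup C K).x = 1 := rfl
@[simp] theorem one_l : (1 : ThetaGroup C K).l = 1 := rfl
@[simp] theorem inv_a (g : ThetaGroup C K) : g⁻¹.a = g.a⁻¹ * g.l g.x := rfl
@[simp] theorem inv_x (g : ThetaGroup C K) : g⁻¹.x = g.x⁻¹ := rfl
@[simp] theorem inv_l (g : ThetaGroup C K) : g⁻¹.l = g.l⁻¹ := rfl

instance instGroup : Group (ThetaGroup C K) where
  mul_assoc g₁ g₂ g₃ := by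
    ext <;> simp [mul_assoc, mul_comm, mul_left_comm]
  one_mul g := by ext <;> simp
  mul_one g := by ext <;> simp
  inv_mul_cancel g := by ext <;> simp [mul_comm]

theorem decomp (α : C) (x : K) (l : K →* C) :
    (⟨α, x, l⟩ : ThetaGroup C K) = (⟨α, 1, 1⟩ : ThetaGroup C K) * ⟨1, 1, l⟩ * ⟨1, x, 1⟩ := by
  ext <;> simp

theorem comm_eq (x₁ x₂ : K) (l₁ l₂ : K →* C) :
    (⟨1, x₁, l₁⟩ : ThetaGroup C K) * ⟨1, x₂, l₂⟩ * (⟨1, x₁, l₁⟩ : ThetaGroup C K)⁻¹ *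
        (⟨1, x₂, l₂⟩ : ThetaGroup C K)⁻¹ = ⟨l₂ x₁ * (l₁ x₂)⁻¹, 1, 1⟩ := by
  ext <;> simp
  rw [mul_comm (l₁ x₂)⁻¹, ← mul_assoc, mul_assoc (l₂ x₁), mul_inv_cancel, mul_one]

/-- `x ↦ ⟨1, x, 1⟩` as a monoid hom. -/
def jK : K →* ThetaGroup C K where
  toFun x := ⟨1, x, 1⟩
  map_one' := rfl
  map_mul' x y := by ext <;> simp

/-- `l ↦ ⟨1, 1, l⟩` as a monoid hom. -/
def jL : (K →* C) →* ThetaGroup C K where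
  toFun l := ⟨1, 1, l⟩
  map_one' := rfl
  map_mul' l₁ l₂ := by ext <;> simp

end ThetaGroup

section ThetaMain

variable {C G H K : Type*} [CommGroup C] [Group G] [CommGroup H] [CommGroup K]
variable (ι : C →* G) (π : G →* H)

/-- The forward homomorphism `(α, x, l) ↦ ι α * v l * u x`. -/
def thetaHom (u : K →* G) (v : (K →* C) →* G)
    (hcomm : ∀ (c : C) (g : G), g * ι c = ι c * g)
    (key : ∀ (x : K) (l : K →* C), u x * v l = ι (l x) * v l * u x) :
    ThetaGroup C K →* G :=
  MonoidHom.mk' (fun g => ι g.a * v g.l * u g.x) (by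
    intro g₁ g₂
    simp only [ThetaGroup.mul_a, ThetaGroup.mul_x, ThetaGroup.mul_l, map_mul]
    calc ι g₁.a * ι g₂.a * ι (g₂.l g₁.x) * (v g₁.l * v g₂.l) * (u g₁.x * u g₂.x)
        = ι g₁.a * (ι g₂.a * ((ι (g₂.l g₁.x) * v g₁.l) * (v g₂.l * (u g₁.x * u g₂.x)))) := by
          group
      _ = ι g₁.a * (ι g₂.a * ((v g₁.l * ι (g₂.l g₁.x)) * (v g₂.l * (u g₁.x * u g₂.x)))) := by
          rw [hcomm]
      _ = ι g₁.a * ((ι g₂.a * v g₁.l) * ((ι (g₂.l g₁.x) * v g₂.l * u g₁.x) * u g₂.x)) := by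
          group
      _ = ι g₁.a * ((v g₁.l * ι g₂.a) * ((u g₁.x * v g₂.l) * u g₂.x)) := by
          rw [hcomm, key]
      _ = ι g₁.a * (v g₁.l * ((ι g₂.a * u g₁.x) * (v g₂.l * u g₂.x))) := by
          group
      _ = ι g₁.a * (v g₁.l * ((u g₁.x * ι g₂.a) * (v g₂.l * u g₂.x))) := by
          rw [hcomm]
      _ = ι g₁.a * v g₁.l * u g₁.x * (ι g₂.a * v g₂.l * u g₂.x) := by
          group)

/-- The forward isomorphism. -/
noncomputable def thetaEquiv (δ : (K × (K →* C)) ≃* H) (u : K →* G) (v : (K →* C) →* G)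
    (hι : Function.Injective ι)
    (hcomm : ∀ (c : C) (g : G), g * ι c = ι c * g)
    (hker : ∀ g : G, π g = 1 ↔ g ∈ Set.range ι)
    (hu : ∀ x : K, π (u x) = δ (x, 1))
    (hv : ∀ l : K →* C, π (v l) = δ (1, l))
    (key : ∀ (x : K) (l : K →* C), u x * v l = ι (l x) * v l * u x) :
    ThetaGroup C K ≃* G := by
  refine MulEquiv.ofBijective (thetaHom ι u v hcomm key) ⟨?_, ?_⟩
  · have hπι : ∀ α : C, π (ι α) = 1 := fun α => (hker _).mpr ⟨α, rfl⟩
    rw [injective_iff_map_eq_one]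
    intro g hg
    have h1 : δ (g.x, g.l) = 1 := by
      have := congrArg π hg
      simp only [thetaHom, MonoidHom.mk'_apply, map_mul, map_one, hπι, hu, hv, one_mul] at this
      rw [← map_mul] at this
      simpa using this
    have h2 : (g.x, g.l) = (1 : K × (K →* C)) := δ.injective (by simpa using h1)
    have hx : g.x = 1 := congrArg Prod.fst h2
    have hl : g.l = 1 := congrArg Prod.snd h2
    have h3 : ι g.a = 1 := by
      have := hg
      simp only [thetaHom, MonoidHom.mk'_apply, hx, hl, map_one, mul_one] at this
      exact this
    have ha : g.a = 1 := hι (by simpa using h3)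
    ext <;> simp [ha, hx, hl]
  · intro g
    obtain ⟨z, hz⟩ := δ.surjective (π g)
    have h1 : π (g * (v z.2 * u z.1)⁻¹) = 1 := by
      have h2 : π (v z.2 * u z.1) = δ z := by
        rw [map_mul, hu, hv, ← map_mul]
        congr 1
        ext <;> simp
      rw [map_mul, map_inv, h2, hz, mul_inv_cancel]
    obtain ⟨α, hα⟩ := (hker _).mp h1
    refine ⟨⟨α, z.1, z.2⟩, ?_⟩
    simp only [thetaHom, MonoidHom.mk'_apply]
    rw [hα]
    group

/-- The backward isomorphism `δ_Θ`. -/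
noncomputable def deltaEquiv (hπ : Function.Surjective π)
    (hker : ∀ g : G, π g = 1 ↔ g ∈ Set.range ι)
    (Θ : ThetaGroup C K ≃* G) (hΘ : ∀ α : C, Θ ⟨α, 1, 1⟩ = ι α) :
    (K × (K →* C)) ≃* H := by
  have hπι : ∀ α : C, π (ι α) = 1 := fun α => (hker _).mpr ⟨α, rfl⟩
  have hπΘ : ∀ (α : C) (x : K) (l : K →* C), π (Θ ⟨α, x, l⟩) = π (Θ ⟨1, x, l⟩) := by
    intro α x l
    have : (⟨α, x, l⟩ : ThetaGroup C K) = (⟨α, 1, 1⟩ : ThetaGroup C K) * ⟨1, x, l⟩ := by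
      ext <;> simp
    rw [this, map_mul, map_mul, hΘ, hπι, one_mul]
  refine MulEquiv.ofBijective
    (MonoidHom.mk' (fun z => π (Θ ⟨1, z.1, z.2⟩)) ?_) ⟨?_, ?_⟩
  · intro z w
    rw [← map_mul, ← map_mul]
    show π (Θ ⟨1, z.1 * w.1, z.2 * w.2⟩) = π (Θ ((⟨1, z.1, z.2⟩ : ThetaGroup C K) * ⟨1, w.1, w.2⟩))
    have : (⟨1, z.1, z.2⟩ : ThetaGroup C K) * ⟨1, w.1, w.2⟩
        = ⟨w.2 z.1, z.1 * w.1, z.2 * w.2⟩ := by ext <;> simp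
    rw [this]
    exact (hπΘ _ _ _).symm
  · rw [injective_iff_map_eq_one]
    intro z hz
    obtain ⟨α, hα⟩ := (hker _).mp hz
    have := Θ.injective (show Θ ⟨1, z.1, z.2⟩ = Θ ⟨α, 1, 1⟩ by rw [hΘ, ← hα])
    have hx : z.1 = 1 := congrArg ThetaGroup.x this
    have hl : z.2 = 1 := congrArg ThetaGroup.l this
    ext <;> simp [hx, hl]
  · intro h
    obtain ⟨g, hg⟩ := hπ h
    obtain ⟨g', hg'⟩ := Θ.surjective g
    exact ⟨(g'.x, g'.l), by simp only [MonoidHom.mk'_apply]; rw [← hπΘ g'.a]; simp [hg', hg]⟩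

end ThetaMain
theorem key_of {C G H K : Type*} [CommGroup C] [Group G] [CommGroup H] [CommGroup K]
    (ι : C →* G) (π : G →* H)
    (e : H → H → C) (he : ∀ g h : G, ι (e (π g) (π h)) = g * h * g⁻¹ * h⁻¹)
    (δ : (K × (K →* C)) ≃* H) (u : K →* G) (v : (K →* C) →* G)
    (hpair : ∀ z w : K × (K →* C), e (δ z) (δ w) = w.2 z.1 * (z.2 w.1)⁻¹)
    (hu : ∀ x : K, π (u x) = δ (x, 1))
    (hv : ∀ l : K →* C, π (v l) = δ (1, l)) :
    ∀ (x : K) (l : K →* C), u x * v l = ι (l x) * v l * u x := by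
  intro x l
  have h1 := he (u x) (v l)
  rw [hu, hv, hpair (x, 1) (1, l)] at h1
  simp only [MonoidHom.one_apply, inv_one, mul_one] at h1
  calc u x * v l = (u x * v l * (u x)⁻¹ * (v l)⁻¹) * (v l * u x) := by group
    _ = ι (l x) * v l * u x := by rw [← h1, ← mul_assoc]

/-- Let `1 → C →ι G →π H → 1` be a central extension of a commutative group `H` by a
commutative group `C`, with commutator pairing `e` (characterized by
`ι (e (π g) (π h)) = g h g⁻¹ h⁻¹`).  Let `K` be a commutative group, `K^D = Hom(K, C)` and
`ThetaGroup C K` the standard theta group, whose commutator pairing on `K × K^D` is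
`e_K((x₁,l₁),(x₂,l₂)) = l₂(x₁) · l₁(x₂)⁻¹`.  A *theta structure* is a group isomorphism
`Θ : ThetaGroup C K ≃* G` with `Θ (α, 1, 1) = ι α`; a *Lagrangian decomposition* is a group
isomorphism `δ : K × K^D ≃* H` carrying `e_K` to `e`.  Then the assignment
`(δ, u, v) ↦ Θ_{u,v}`, `Θ_{u,v}(α, x, l) = ι α · v l · u x`, is a bijection from the set of
triples `(δ, u, v)` — with `δ` a Lagrangian decomposition, `u : K →* G` with
`π (u x) = δ (x, 1)` and `v : K^D →* G` with `π (v l) = δ (1, l)` — onto the set of theta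
structures, with inverse `Θ ↦ (δ_Θ, u_Θ, v_Θ)` where `δ_Θ (x, l) = π (Θ (1, x, l))`,
`u_Θ x = Θ (1, x, 1)` and `v_Θ l = Θ (1, 1, l)`. -/
theorem theta_structures_biject_with_triples
    {C G H K : Type*} [CommGroup C] [Group G] [CommGroup H] [CommGroup K]
    (ι : C →* G) (π : G →* H)
    (hι : Function.Injective ι)
    (hcent : ∀ c : C, ι c ∈ Subgroup.center G)
    (hπ : Function.Surjective π)
    (hker : ∀ g : G, π g = 1 ↔ g ∈ Set.range ι)
    (e : H → H → C)
    (he : ∀ g h : G, ι (e (π g) (π h)) = g * h * g⁻¹ * h⁻¹) :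
    ∃ Φ : {t : ((K × (K →* C)) ≃* H) × (K →* G) × ((K →* C) →* G) //
            (∀ z w : K × (K →* C), e (t.1 z) (t.1 w) = w.2 z.1 * (z.2 w.1)⁻¹) ∧
            (∀ x : K, π (t.2.1 x) = t.1 (x, 1)) ∧
            (∀ l : K →* C, π (t.2.2 l) = t.1 (1, l))} ≃
          {Θ : ThetaGroup C K ≃* G // ∀ α : C, Θ ⟨α, 1, 1⟩ = ι α},
      (∀ t, ∀ g : ThetaGroup C K,
          (Φ t : ThetaGroup C K ≃* G) g = ι g.a * t.1.2.2 g.l * t.1.2.1 g.x) ∧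
      (∀ Θ, (∀ (x : K) (l : K →* C), (Φ.symm Θ).1.1 (x, l) = π ((Θ : ThetaGroup C K ≃* G) ⟨1, x, l⟩)) ∧
            (∀ x : K, (Φ.symm Θ).1.2.1 x = (Θ : ThetaGroup C K ≃* G) ⟨1, x, 1⟩) ∧
            (∀ l : K →* C, (Φ.symm Θ).1.2.2 l = (Θ : ThetaGroup C K ≃* G) ⟨1, 1, l⟩)) := by
  have hcomm : ∀ (c : C) (g : G), g * ι c = ι c * g :=
    fun c g => Subgroup.mem_center_iff.mp (hcent c) g
  refine ⟨⟨fun t => ⟨thetaEquiv ι π t.1.1 t.1.2.1 t.1.2.2 hι hcomm hker t.2.2.1 t.2.2.2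
        (key_of ι π e he t.1.1 t.1.2.1 t.1.2.2 t.2.1 t.2.2.1 t.2.2.2), ?_⟩,
      fun Θ => ⟨⟨deltaEquiv ι π hπ hker Θ.1 Θ.2,
        Θ.1.toMonoidHom.comp ThetaGroup.jK, Θ.1.toMonoidHom.comp ThetaGroup.jL⟩,
        ?_, fun x => rfl, fun l => rfl⟩, ?_, ?_⟩,
    fun t g => rfl, fun Θ => ⟨fun x l => rfl, fun x => rfl, fun l => rfl⟩⟩
  -- theta structure property of the forward map
  · intro α
    show ι α * t.1.2.2 1 * t.1.2.1 1 = ι α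
    simp
  -- pairing property of the backward map
  · intro z w
    show e (π (Θ.1 ⟨1, z.1, z.2⟩)) (π (Θ.1 ⟨1, w.1, w.2⟩)) = w.2 z.1 * (z.2 w.1)⁻¹
    apply hι
    rw [he, ← Θ.2 (w.2 z.1 * (z.2 w.1)⁻¹), ← ThetaGroup.comm_eq z.1 w.1 z.2 w.2,
      map_mul, map_mul, map_mul, map_inv, map_inv]
  -- left inverse
  · intro t
    apply Subtype.ext
    refine Prod.ext ?_ (Prod.ext ?_ ?_)
    · apply MulEquiv.ext
      intro z
      show π (ι 1 * t.1.2.2 z.2 * t.1.2.1 z.1) = t.1.1 z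
      rw [map_one, one_mul, map_mul, t.2.2.1, t.2.2.2, ← map_mul]
      congr 1
      ext <;> simp
    · apply MonoidHom.ext
      intro x
      show ι 1 * t.1.2.2 1 * t.1.2.1 x = t.1.2.1 x
      simp
    · apply MonoidHom.ext
      intro l
      show ι 1 * t.1.2.2 l * t.1.2.1 1 = t.1.2.2 l
      simp
  -- right inverse
  · intro Θ
    apply Subtype.ext
    apply MulEquiv.ext
    intro g
    show ι g.a * Θ.1 ⟨1, 1, g.l⟩ * Θ.1 ⟨1, g.x, 1⟩ = Θ.1 g
    rw [← Θ.2 g.a, ← map_mul, ← map_mul, ← ThetaGroup.decomp]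
end

section
/- Let 1 → C →ι G →π H → 1 be a central extension of a commutative group H by a commutative group C, with commutator pairing e. Let K be a commutative group, K^D = Hom(K, C), and G(K) the standard theta group. Let δ: K × K^D → H be an injective group homomorphism satisfying e(δ(x₁, l₁), δ(x₂, l₂)) = l₂(x₁)·l₁(x₂)⁻¹ for all (x₁, l₁), (x₂, l₂) ∈ K × K^D, and let u: K → G and v: K^D → G be group homomorphisms with π(u(x)) = δ(x, 1) for all x ∈ K and π(v(l)) = δ(0, l) for all l ∈ K^D. Then the map Θ_{u,v}: G(K) → G defined by Θ_{u,v}(α, x, l) = ι(α)·v(l)·u(x) is a group homomorphism, and it satisfies Θ_{u,v}(α, 0, 1) = ι(α) for all α ∈ C. -/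
/-- Let `1 → C →ι G →π H → 1` be a central extension of a commutative group `H` by a
commutative group `C`, with commutator pairing `e`.  Let `K` be a commutative group,
`K^D = Hom(K, C)`, and `ThetaGroup C K` the standard theta group.  Let
`δ : K × K^D → H` be an injective group homomorphism carrying the standard pairing to `e`,
and let `u : K → G`, `v : K^D → G` be group homomorphisms with `π (u x) = δ (x, 1)` and
`π (v l) = δ (1, l)`.  Then `Θ_{u,v} : (α, x, l) ↦ ι α * v l * u x` is a group homomorphism
and `Θ_{u,v} (α, 1, 1) = ι α`. -/
theorem theta_of_triple_is_hom
    {C G H K : Type*} [CommGroup C] [Group G] [CommGroup H] [CommGroup K]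
    (ι : C →* G) (π : G →* H)
    (hι : Function.Injective ι)
    (hcent : ∀ c : C, ι c ∈ Subgroup.center G)
    (hπ : Function.Surjective π)
    (hker : ∀ g : G, π g = 1 ↔ g ∈ Set.range ι)
    (e : H → H → C)
    (he : ∀ g h : G, ι (e (π g) (π h)) = g * h * g⁻¹ * h⁻¹)
    (δ : (K × (K →* C)) →* H)
    (hδinj : Function.Injective δ)
    (hδ : ∀ z w : K × (K →* C), e (δ z) (δ w) = w.2 z.1 * (z.2 w.1)⁻¹)
    (u : K →* G) (hu : ∀ x : K, π (u x) = δ (x, 1))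
    (v : (K →* C) →* G) (hv : ∀ l : K →* C, π (v l) = δ (1, l)) :
    (∀ g₁ g₂ : ThetaGroup C K,
        ι (g₁ * g₂).a * v (g₁ * g₂).l * u (g₁ * g₂).x =
          (ι g₁.a * v g₁.l * u g₁.x) * (ι g₂.a * v g₂.l * u g₂.x)) ∧
    (∀ α : C, ι α * v (1 : K →* C) * u (1 : K) = ι α) := by
  have hc : ∀ (c : C) (g : G), g * ι c = ι c * g :=
    fun c g => Subgroup.mem_center_iff.mp (hcent c) g
  have hswap : ∀ (x : K) (l : K →* C), u x * v l = ι (l x) * (v l * u x) := by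
    intro x l
    have h1 : ι (e (π (u x)) (π (v l))) = u x * v l * (u x)⁻¹ * (v l)⁻¹ := he _ _
    rw [hu, hv, hδ] at h1
    simp only [MonoidHom.one_apply, inv_one, mul_one] at h1
    rw [h1]; group
  constructor
  · intro g₁ g₂
    simp only [ThetaGroup.mul_a, ThetaGroup.mul_x, ThetaGroup.mul_l, map_mul, mul_assoc,
      mul_right_inj]
    rw [show u g₁.x * (ι g₂.a * (v g₂.l * u g₂.x)) = ι g₂.a * (u g₁.x * (v g₂.l * u g₂.x)) from by
        rw [← mul_assoc, hc, mul_assoc],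
      show v g₁.l * (ι g₂.a * (u g₁.x * (v g₂.l * u g₂.x)))
          = ι g₂.a * (v g₁.l * (u g₁.x * (v g₂.l * u g₂.x))) from by
        rw [← mul_assoc, hc, mul_assoc],
      mul_right_inj,
      show u g₁.x * (v g₂.l * u g₂.x) = ι (g₂.l g₁.x) * (v g₂.l * (u g₁.x * u g₂.x)) from by
        rw [← mul_assoc, hswap, mul_assoc, mul_assoc],
      show v g₁.l * (ι (g₂.l g₁.x) * (v g₂.l * (u g₁.x * u g₂.x)))
          = ι (g₂.l g₁.x) * (v g₁.l * (v g₂.l * (u g₁.x * u g₂.x))) from by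
        rw [← mul_assoc, hc, mul_assoc],
      mul_right_inj]
  · intro α
    simp
end

section
/- Let H be a finite commutative group (written additively), M a commutative group (written multiplicatively), and e: H × H → M a perfect alternating bimultiplicative pairing. Suppose H is the internal direct sum of two subgroups C and E such that e(c, c') = 1 for all c, c' ∈ C and e(x, x') = 1 for all x, x' ∈ E. Then the map C → Hom(E, M) sending c to the restriction e(c, ·)|_E is a group isomorphism, and likewise the map E → Hom(C, M) sending x to e(x, ·)|_C is a group isomorphism. -/
theorem aux_isotropic
    {H M : Type*} [CommGroup H] [CommGroup M]
    (e : H → H → M)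
    (hbl : ∀ x y z : H, e (x * y) z = e x z * e y z)
    (hbr : ∀ x y z : H, e x (y * z) = e x y * e x z)
    (hperf : ∃ φ : H ≃* (H →* M), ∀ x y : H, φ x y = e x y)
    (C E : Subgroup H)
    (hsum : ∀ h : H, ∃ c ∈ C, ∃ x ∈ E, h = c * x)
    (hdisj : ∀ g : H, g ∈ C → g ∈ E → g = 1)
    (hC : ∀ c ∈ C, ∀ c' ∈ C, e c c' = 1)
    (hE : ∀ x ∈ E, ∀ x' ∈ E, e x x' = 1) :
    ∃ α : C ≃* (E →* M), ∀ (c : C) (x : E), α c x = e (c : H) (x : H) := by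
  classical
  obtain ⟨φ, hφ⟩ := hperf
  have h1r : ∀ x : H, e x 1 = 1 := by
    intro x
    have h := hbr x 1 1
    rw [one_mul] at h
    exact (left_eq_mul.mp h)
  have h1l : ∀ x : H, e 1 x = 1 := by
    intro x
    have h := hbl 1 1 x
    rw [one_mul] at h
    exact (left_eq_mul.mp h)
  -- uniqueness of decompositions
  have huniq : ∀ c1 ∈ C, ∀ x1 ∈ E, ∀ c2 ∈ C, ∀ x2 ∈ E,
      c1 * x1 = c2 * x2 → c1 = c2 ∧ x1 = x2 := by
    intro c1 hc1 x1 hx1 c2 hc2 x2 hx2 heq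
    have key : c2⁻¹ * c1 = x2 * x1⁻¹ := by
      have h' : c2⁻¹ * (c1 * x1) * x1⁻¹ = c2⁻¹ * (c2 * x2) * x1⁻¹ := by rw [heq]
      calc c2⁻¹ * c1 = c2⁻¹ * (c1 * x1) * x1⁻¹ := by group
        _ = c2⁻¹ * (c2 * x2) * x1⁻¹ := h'
        _ = x2 * x1⁻¹ := by group
    have hmemC : c2⁻¹ * c1 ∈ C := C.mul_mem (C.inv_mem hc2) hc1
    have hmemE : c2⁻¹ * c1 ∈ E := key ▸ E.mul_mem hx2 (E.inv_mem hx1)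
    have h1 : c2⁻¹ * c1 = 1 := hdisj _ hmemC hmemE
    constructor
    · have := inv_mul_eq_one.mp h1
      exact this.symm
    · have h2 : x2 * x1⁻¹ = 1 := key ▸ h1
      exact (mul_inv_eq_one.mp h2).symm
  -- the map
  let f : C →* (E →* M) :=
  { toFun := fun c =>
    { toFun := fun x => e (c : H) (x : H)
      map_one' := h1r c
      map_mul' := fun x y => hbr c x y }
    map_one' := by ext x; exact h1l x
    map_mul' := fun a b => by ext x; exact hbl a b x }
  have hinj : Function.Injective f := by
    rw [injective_iff_map_eq_one]
    intro c hc
    have hEzero : ∀ x : E, e (c : H) (x : H) = 1 := by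
      intro x
      exact DFunLike.congr_fun hc x
    have hall : ∀ y : H, e (c : H) y = 1 := by
      intro y
      obtain ⟨c', hc', x, hx, rfl⟩ := hsum y
      rw [hbr, hC c c.2 c' hc', one_mul]
      exact hEzero ⟨x, hx⟩
    have : φ (c : H) = 1 := by
      ext y
      rw [hφ]
      exact hall y
    have hc1 : (c : H) = 1 := by
      apply φ.injective
      rw [this, map_one]
    exact Subtype.ext hc1
  have hsurj : Function.Surjective f := by
    intro ψ
    choose cf hcf xf hxf hdec using fun h => hsum h
    have hxf_eq : ∀ x ∈ E, xf x = x := by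
      intro x hx
      exact (huniq (cf x) (hcf x) (xf x) (hxf x) 1 C.one_mem x hx
        ((hdec x).symm.trans (one_mul x).symm)).2
    have hxf_mul : ∀ a b : H, xf (a * b) = xf a * xf b := by
      intro a b
      have hdec2 : a * b = (cf a * cf b) * (xf a * xf b) := by
        conv_lhs => rw [hdec a, hdec b]
        exact mul_mul_mul_comm _ _ _ _
      exact (huniq (cf (a*b)) (hcf (a*b)) (xf (a*b)) (hxf (a*b))
        (cf a * cf b) (C.mul_mem (hcf a) (hcf b)) (xf a * xf b)
        (E.mul_mem (hxf a) (hxf b)) ((hdec (a*b)).symm.trans hdec2)).2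
    let g : H →* M :=
    { toFun := fun h => ψ ⟨xf h, hxf h⟩
      map_one' := by
        show ψ ⟨xf 1, hxf 1⟩ = 1
        rw [show (⟨xf 1, hxf 1⟩ : E) = 1 from Subtype.ext (hxf_eq 1 E.one_mem), map_one]
      map_mul' := by
        intro a b
        show ψ ⟨xf (a * b), hxf (a * b)⟩ = ψ ⟨xf a, hxf a⟩ * ψ ⟨xf b, hxf b⟩
        rw [show (⟨xf (a*b), hxf (a*b)⟩ : E) = ⟨xf a, hxf a⟩ * ⟨xf b, hxf b⟩ from
          Subtype.ext (hxf_mul a b), map_mul] }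
    set h0 := φ.symm g with hh0
    obtain ⟨c0, hc0, x0, hx0, hdec0⟩ := hsum h0
    refine ⟨⟨c0, hc0⟩, ?_⟩
    ext x
    obtain ⟨x, hx⟩ := x
    show e c0 x = ψ ⟨x, hx⟩
    have hgx : e h0 x = g x := by
      rw [← hφ h0 x, hh0, MulEquiv.apply_symm_apply]
    have hg2 : g x = ψ ⟨x, hx⟩ := by
      show ψ ⟨xf x, hxf x⟩ = ψ ⟨x, hx⟩
      congr 1
      exact Subtype.ext (hxf_eq x hx)
    have : e h0 x = e c0 x := by
      rw [hdec0, hbl, hE x0 hx0 x hx, mul_one]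
    rw [← this, hgx, hg2]
  exact ⟨MulEquiv.ofBijective f ⟨hinj, hsurj⟩, fun c x => rfl⟩

/-- Let `H` be a finite commutative group, `M` a commutative group, and `e : H × H → M` a
perfect alternating bimultiplicative pairing (perfectness: the canonical map
`H → Hom(H, M)`, `x ↦ e x ·`, is a group isomorphism).  Suppose `H` is the internal direct
sum of two subgroups `C` and `E` that are both isotropic for `e`.  Then `c ↦ e c ·|_E` is a
group isomorphism `C ≃ Hom(E, M)`, and likewise `x ↦ e x ·|_C` is a group isomorphism
`E ≃ Hom(C, M)`. -/
theorem isotropic_complements_dual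
    {H M : Type*} [CommGroup H] [Finite H] [CommGroup M]
    (e : H → H → M)
    (hbl : ∀ x y z : H, e (x * y) z = e x z * e y z)
    (hbr : ∀ x y z : H, e x (y * z) = e x y * e x z)
    (halt : ∀ x : H, e x x = 1)
    (hperf : ∃ φ : H ≃* (H →* M), ∀ x y : H, φ x y = e x y)
    (C E : Subgroup H)
    (hsum : ∀ h : H, ∃ c ∈ C, ∃ x ∈ E, h = c * x)
    (hdisj : ∀ g : H, g ∈ C → g ∈ E → g = 1)
    (hC : ∀ c ∈ C, ∀ c' ∈ C, e c c' = 1)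
    (hE : ∀ x ∈ E, ∀ x' ∈ E, e x x' = 1) :
    (∃ α : C ≃* (E →* M), ∀ (c : C) (x : E), α c x = e (c : H) (x : H)) ∧
    (∃ β : E ≃* (C →* M), ∀ (x : E) (c : C), β x c = e (x : H) (c : H)) := by
  constructor
  · exact aux_isotropic e hbl hbr hperf C E hsum hdisj hC hE
  · refine aux_isotropic e hbl hbr hperf E C ?_ (fun g hg hg' => hdisj g hg' hg) hE hC
    intro h
    obtain ⟨c, hc, x, hx, rfl⟩ := hsum h
    exact ⟨x, hx, c, hc, mul_comm c x⟩
end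

section
/- Let H be a finite commutative group (written additively), M a commutative group (written multiplicatively), and e: H × H → M a perfect alternating bimultiplicative pairing. Suppose H is the internal direct sum of two subgroups C and E such that e(c, c') = 1 for all c, c' ∈ C and e(x, x') = 1 for all x, x' ∈ E, and let α: C → Hom(E, M) be the isomorphism c ↦ e(c, ·)|_E. Then the map δ: E × Hom(E, M) → H defined by δ(x, l) = x + α⁻¹(l⁻¹) is a group isomorphism satisfying e(δ(x₁, l₁), δ(x₂, l₂)) = l₂(x₁)·l₁(x₂)⁻¹ for all (x₁, l₁), (x₂, l₂) ∈ E × Hom(E, M); that is, δ is a Lagrangian decomposition of (H, e) of type E. -/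
/-- Let `H` be a finite commutative group, `M` a commutative group, and `e : H × H → M` a
perfect alternating bimultiplicative pairing.  Suppose `H` is the internal direct sum of two
isotropic subgroups `C` and `E`, and let `α : C ≃ Hom(E, M)` be the isomorphism
`c ↦ e c ·|_E`.  Then `δ : E × Hom(E, M) → H`, `δ (x, l) = x * α⁻¹ (l⁻¹)`, is a group
isomorphism satisfying `e (δ (x₁, l₁)) (δ (x₂, l₂)) = l₂ x₁ * (l₁ x₂)⁻¹`; that is, `δ` is a
Lagrangian decomposition of `(H, e)` of type `E`. -/
theorem lagrangian_decomposition_of_isotropic_complements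
    {H M : Type*} [CommGroup H] [Finite H] [CommGroup M]
    (e : H → H → M)
    (hbl : ∀ x y z : H, e (x * y) z = e x z * e y z)
    (hbr : ∀ x y z : H, e x (y * z) = e x y * e x z)
    (halt : ∀ x : H, e x x = 1)
    (hperf : ∃ φ : H ≃* (H →* M), ∀ x y : H, φ x y = e x y)
    (C E : Subgroup H)
    (hsum : ∀ h : H, ∃ c ∈ C, ∃ x ∈ E, h = c * x)
    (hdisj : ∀ g : H, g ∈ C → g ∈ E → g = 1)
    (hC : ∀ c ∈ C, ∀ c' ∈ C, e c c' = 1)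
    (hE : ∀ x ∈ E, ∀ x' ∈ E, e x x' = 1)
    (α : C ≃* (E →* M))
    (hα : ∀ (c : C) (x : E), α c x = e (c : H) (x : H)) :
    ∃ δ : (E × (E →* M)) ≃* H,
      (∀ (x : E) (l : E →* M), δ (x, l) = (x : H) * ((α.symm l⁻¹ : C) : H)) ∧
      (∀ z₁ z₂ : E × (E →* M),
        e (δ z₁) (δ z₂) = z₂.2 z₁.1 * (z₁.2 z₂.1)⁻¹) := by
  classical
  -- the underlying monoid hom
  set f : (E × (E →* M)) →* H :=
    { toFun := fun z => (z.1 : H) * ((α.symm z.2⁻¹ : C) : H)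
      map_one' := by simp
      map_mul' := by
        intro z w
        simp only [Prod.fst_mul, Prod.snd_mul, mul_inv, map_mul,
          Subgroup.coe_mul]
        exact mul_mul_mul_comm _ _ _ _ } with hf
  have hfdef : ∀ z : E × (E →* M), f z = (z.1 : H) * ((α.symm z.2⁻¹ : C) : H) := fun z => rfl
  have hinj : Function.Injective f := by
    intro z w h
    have h' := h
    simp only [hfdef] at h'
    have h1 : ((z.1 : H) / (w.1 : H)) = ((α.symm w.2⁻¹ : C) : H) / ((α.symm z.2⁻¹ : C) : H) :=
      div_eq_div_iff_mul_eq_mul.mpr (h'.trans (mul_comm _ _))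
    have hmemE : (z.1 : H) / (w.1 : H) ∈ E := div_mem z.1.2 w.1.2
    have hmemC : (z.1 : H) / (w.1 : H) ∈ C := by
      rw [h1]; exact div_mem (α.symm w.2⁻¹).2 (α.symm z.2⁻¹).2
    have h2 : (z.1 : H) / (w.1 : H) = 1 := hdisj _ hmemC hmemE
    have hz1 : z.1 = w.1 := by
      ext
      exact div_eq_one.mp h2
    have h3 : ((α.symm w.2⁻¹ : C) : H) = ((α.symm z.2⁻¹ : C) : H) := by
      rw [h2] at h1
      exact div_eq_one.mp h1.symm
    have hz2 : z.2 = w.2 := by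
      have : (α.symm w.2⁻¹ : C) = (α.symm z.2⁻¹ : C) := Subtype.ext h3
      have := α.symm.injective this
      exact (inv_injective this).symm
    exact Prod.ext hz1 hz2
  have hsurj : Function.Surjective f := by
    intro h
    obtain ⟨c, hc, x, hx, rfl⟩ := hsum h
    refine ⟨(⟨x, hx⟩, (α ⟨c, hc⟩)⁻¹), ?_⟩
    simp [hfdef, mul_comm]
  let δ : (E × (E →* M)) ≃* H := MulEquiv.ofBijective f ⟨hinj, hsurj⟩
  have hδ : ∀ z : E × (E →* M), δ z = (z.1 : H) * ((α.symm z.2⁻¹ : C) : H) := fun z => rfl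
  -- antisymmetry
  have hanti : ∀ x y : H, e x y * e y x = 1 := by
    intro x y
    have h1 := halt (x * y)
    rw [hbl, hbr, hbr, halt, halt, one_mul, mul_one] at h1
    exact h1
  refine ⟨δ, fun x l => rfl, ?_⟩
  intro z₁ z₂
  obtain ⟨x₁, l₁⟩ := z₁
  obtain ⟨x₂, l₂⟩ := z₂
  have hc₁ : ((α.symm l₁⁻¹ : C) : H) ∈ C := (α.symm l₁⁻¹).2
  have hc₂ : ((α.symm l₂⁻¹ : C) : H) ∈ C := (α.symm l₂⁻¹).2
  have key : ∀ (l : E →* M) (x : E), e ((α.symm l⁻¹ : C) : H) (x : H) = (l x)⁻¹ := by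
    intro l x
    have := hα (α.symm l⁻¹) x
    rw [α.apply_symm_apply] at this
    simpa using this.symm
  simp only [hδ]
  rw [hbl, hbr, hbr]
  rw [hE _ x₁.2 _ x₂.2, hC _ hc₁ _ hc₂]
  rw [key l₁ x₂]
  have hswap : e (x₁ : H) ((α.symm l₂⁻¹ : C) : H) = l₂ x₁ := by
    have h0 := hanti ((α.symm l₂⁻¹ : C) : H) (x₁ : H)
    rw [key l₂ x₁] at h0
    exact (inv_mul_eq_one.mp h0).symm
  rw [hswap]
  group
end

section
/- Let K be a finite commutative group (written additively) and K^D = Hom(K, ℂˣ) its character group. The pairing e_K on K × K^D defined by e_K((x₁, l₁), (x₂, l₂)) = l₂(x₁)·l₁(x₂)⁻¹ is bimultiplicative, alternating, and perfect: the map K × K^D → Hom(K × K^D, ℂˣ), z ↦ e_K(z, ·), is a group isomorphism. -/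
section aux
variable {K : Type*} [CommGroup K] [Finite K]

lemma aux_heru (G : Type*) [CommGroup G] [Finite G] :
    HasEnoughRootsOfUnity ℂ (Monoid.exponent G) := by
  have : NeZero ((Monoid.exponent G : ℕ) : ℂ) := by
    exact ⟨by exact_mod_cast (Monoid.ExponentExists.of_finite (G := G)).exponent_ne_zero⟩
  infer_instance

lemma aux_finite : Finite (K →* ℂˣ) := by
  have := aux_heru K
  obtain ⟨e⟩ := CommGroup.monoidHom_mulEquiv_of_hasEnoughRootsOfUnity K ℂ
  exact Finite.of_equiv K e.symm.toEquiv

lemma aux_left {K : Type*} [CommGroup K] (z₁ z₂ w : K × (K →* ℂˣ)) :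
    w.2 (z₁ * z₂).1 * ((z₁ * z₂).2 w.1)⁻¹
      = w.2 z₁.1 * (z₁.2 w.1)⁻¹ * (w.2 z₂.1 * (z₂.2 w.1)⁻¹) := by
  simp only [Prod.fst_mul, Prod.snd_mul, map_mul, MonoidHom.mul_apply, mul_inv,
    mul_mul_mul_comm]

lemma aux_right {K : Type*} [CommGroup K] (z w₁ w₂ : K × (K →* ℂˣ)) :
    (w₁ * w₂).2 z.1 * (z.2 (w₁ * w₂).1)⁻¹
      = w₁.2 z.1 * (z.2 w₁.1)⁻¹ * (w₂.2 z.1 * (z.2 w₂.1)⁻¹) := by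
  simp only [Prod.fst_mul, Prod.snd_mul, map_mul, MonoidHom.mul_apply, mul_inv,
    mul_mul_mul_comm]
end aux

/-- Let `K` be a finite commutative group and `K^D = Hom(K, ℂˣ)` its character group.  The
pairing `e_K ((x₁, l₁), (x₂, l₂)) = l₂ x₁ · (l₁ x₂)⁻¹` on `K × K^D` is bimultiplicative,
alternating, and perfect: the map `K × K^D → Hom(K × K^D, ℂˣ)`, `z ↦ e_K z ·`, is a group
isomorphism. -/
theorem standard_pairing_perfect
    {K : Type*} [CommGroup K] [Finite K]
    (eK : (K × (K →* ℂˣ)) → (K × (K →* ℂˣ)) → ℂˣ)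
    (heK : ∀ z w : K × (K →* ℂˣ), eK z w = w.2 z.1 * (z.2 w.1)⁻¹) :
    (∀ z₁ z₂ w : K × (K →* ℂˣ), eK (z₁ * z₂) w = eK z₁ w * eK z₂ w) ∧
    (∀ z w₁ w₂ : K × (K →* ℂˣ), eK z (w₁ * w₂) = eK z w₁ * eK z w₂) ∧
    (∀ z : K × (K →* ℂˣ), eK z z = 1) ∧
    (∃ φ : (K × (K →* ℂˣ)) ≃* ((K × (K →* ℂˣ)) →* ℂˣ),
      ∀ z w : K × (K →* ℂˣ), φ z w = eK z w) := by
  have := aux_finite (K := K)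
  refine ⟨fun z₁ z₂ w => by rw [heK, heK, heK]; exact aux_left z₁ z₂ w,
    fun z w₁ w₂ => by rw [heK, heK, heK]; exact aux_right z w₁ w₂,
    fun z => by rw [heK]; exact mul_inv_cancel _, ?_⟩
  let Φ : (K × (K →* ℂˣ)) →* ((K × (K →* ℂˣ)) →* ℂˣ) :=
    { toFun := fun z =>
        { toFun := fun w => w.2 z.1 * (z.2 w.1)⁻¹
          map_one' := by simp
          map_mul' := fun w₁ w₂ => aux_right z w₁ w₂ }
      map_one' := by ext w; simp
      map_mul' := fun z₁ z₂ => by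
        ext w
        exact congrArg Units.val (aux_left z₁ z₂ w) }
  have hinj : Function.Injective Φ := by
    rw [injective_iff_map_eq_one]
    intro z hz
    have h1 : ∀ w : K × (K →* ℂˣ), w.2 z.1 * (z.2 w.1)⁻¹ = 1 :=
      fun w => DFunLike.congr_fun hz w
    have hl : z.2 = 1 := by
      ext x
      have := h1 (x, 1)
      simpa using (inv_eq_one.mp (by simpa using this))
    have hx : z.1 = 1 := by
      by_contra hne
      have := aux_heru K
      obtain ⟨l, hlne⟩ := CommGroup.exists_apply_ne_one_of_hasEnoughRootsOfUnity K ℂ hne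
      have := h1 (1, l)
      simp at this
      exact hlne this
    exact Prod.ext hx hl
  have hH := aux_heru (K × (K →* ℂˣ))
  obtain ⟨e⟩ := CommGroup.monoidHom_mulEquiv_of_hasEnoughRootsOfUnity (K × (K →* ℂˣ)) ℂ
  have hbij : Function.Bijective Φ := by
    have h3 : Function.Bijective (e.toMonoidHom.comp Φ) :=
      Finite.injective_iff_bijective.mp (e.injective.comp hinj)
    have heq : (⇑Φ) = e.symm ∘ (e.toMonoidHom.comp Φ) := by ext z : 1; simp
    rw [heq]
    exact e.symm.bijective.comp h3
  refine ⟨MulEquiv.ofBijective Φ hbij, fun z w => ?_⟩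
  rw [heK]
  rfl
end

section
/- Let 0 → C →ι G →π K → 0 be a short exact sequence of commutative groups (written additively): ι is injective, π is surjective, and the kernel of π equals the image of ι. Let q ≥ 1 be an integer, and suppose that q·x = 0 for all x ∈ K and that C is q-divisible (for every c ∈ C there exists c' ∈ C with q·c' = c). Then the induced sequence of q-torsion subgroups 0 → C[q] → G[q] → K → 0 is exact; in particular, π maps G[q] = {g ∈ G : q·g = 0} surjectively onto K. -/
/-- Let `0 → C →ι G →π K → 0` be a short exact sequence of commutative groups, let `q ≥ 1`,
and suppose `q • x = 0` for all `x ∈ K` and `C` is `q`-divisible.  Then the induced sequence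
of `q`-torsion subgroups `0 → C[q] → G[q] → K → 0` is exact: `ι` is injective on `C[q]`, an
element `g ∈ G[q]` satisfies `π g = 0` iff it is of the form `ι c` with `c ∈ C[q]`, and — in
particular — `π` maps `G[q] = {g : q • g = 0}` surjectively onto `K`. -/
theorem torsion_sequence_exact
    {C G K : Type*} [AddCommGroup C] [AddCommGroup G] [AddCommGroup K]
    (ι : C →+ G) (π : G →+ K)
    (hι : Function.Injective ι)
    (hπ : Function.Surjective π)
    (hker : ∀ g : G, π g = 0 ↔ g ∈ Set.range ι)
    (q : ℕ) (hq : 1 ≤ q)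
    (hK : ∀ x : K, q • x = 0)
    (hdiv : ∀ c : C, ∃ c' : C, q • c' = c) :
    (∀ c c' : C, q • c = 0 → q • c' = 0 → ι c = ι c' → c = c') ∧
    (∀ g : G, q • g = 0 → (π g = 0 ↔ ∃ c : C, q • c = 0 ∧ ι c = g)) ∧
    (∀ x : K, ∃ g : G, q • g = 0 ∧ π g = x) := by
  refine ⟨fun c c' _ _ h => hι h, fun g hg => ?_, fun x => ?_⟩
  · constructor
    · intro h
      obtain ⟨c, rfl⟩ := (hker g).mp h
      exact ⟨c, hι (by rw [map_nsmul, hg, map_zero]), rfl⟩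
    · rintro ⟨c, _, rfl⟩
      exact (hker _).mpr ⟨c, rfl⟩
  · obtain ⟨g, rfl⟩ := hπ x
    have : π (q • g) = 0 := by rw [map_nsmul]; exact hK _
    obtain ⟨c, hc⟩ := (hker _).mp this
    obtain ⟨c', hc'⟩ := hdiv c
    refine ⟨g - ι c', ?_, ?_⟩
    · rw [smul_sub, ← map_nsmul, hc', hc, sub_self]
    · rw [map_sub, (hker _).mpr ⟨c', rfl⟩, sub_zero]
end
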